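/- arXiv:2605.30991 — 2 statements merged into one kernel-verified Lean document; each statement's English description precedes it below -/
import Mathlib

section
/- Let (X, 𝒜, μ) be a probability space, f : X → ℝ measurable with exp∘f integrable with respect to μ, and B ∈ 𝒜 with μ(B) = ε ∈ (0, 1). Suppose there exist a ∈ ℝ and δ > 0 such that f ≥ a on B and f ≤ a − δ on Bᶜ. Let π be the probability measure with dπ/dμ = exp(f)/Z, Z = ∫ exp(f) dμ. Then the mass the tilted measure assigns to B satisfies π(B) ≥ ε / (ε + (1 − ε) e^{−δ}) = 1 / (1 + ((1 − ε)/ε) e^{−δ}). -/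
/-!
The tilted mass of `B` is `I / (I + J)` with `I = ∫_B exp f ≥ μ(B) e^a` and
`J = ∫_{Bᶜ} exp f ≤ μ(Bᶜ) e^{a - δ}`; since `x / (x + y)` increases in `x` and decreases in `y`,
it is at least `μ(B) e^a / (μ(B) e^a + μ(Bᶜ) e^{a - δ})`, and the factor `e^a` cancels.
-/

open MeasureTheory Real

theorem div_add_le_div_add_of_le_of_le {p q I J : ℝ} (hp : 0 < p) (hq : 0 ≤ q) (hI : p ≤ I)
    (hJ₀ : 0 ≤ J) (hJ : J ≤ q) : p / (p + q) ≤ I / (I + J) := by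
  rw [div_le_div_iff₀ (by positivity) (by linarith)]
  nlinarith [mul_le_mul_of_nonneg_left hJ hp.le, mul_le_mul_of_nonneg_right hI hq]

namespace MeasureTheory

variable {X : Type*} [MeasurableSpace X] {μ : Measure X} {f : X → ℝ} {s : Set X}

theorem tilted_apply_eq_ofReal_setIntegral_div (hint : Integrable (fun x => exp (f x)) μ)
    (hs : MeasurableSet s) :
    μ.tilted f s = ENNReal.ofReal ((∫ x in s, exp (f x) ∂μ) /
      ((∫ x in s, exp (f x) ∂μ) + ∫ x in sᶜ, exp (f x) ∂μ)) := by
  rw [tilted_apply_eq_ofReal_integral' f hs, integral_div, integral_add_compl hs hint]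

theorem ofReal_div_le_tilted_apply [IsFiniteMeasure μ] {a b : ℝ}
    (hint : Integrable (fun x => exp (f x)) μ) (hs : MeasurableSet s) (hμs : 0 < μ.real s)
    (hfs : ∀ x ∈ s, a ≤ f x) (hfsc : ∀ x ∉ s, f x ≤ b) :
    ENNReal.ofReal (μ.real s * exp a / (μ.real s * exp a + μ.real sᶜ * exp b)) ≤
      μ.tilted f s := by
  have h_on : μ.real s * exp a ≤ ∫ x in s, exp (f x) ∂μ := by
    rw [mul_comm]
    exact setIntegral_ge_of_const_le_real hs (measure_ne_top μ s)
      (fun x hx => exp_le_exp.mpr (hfs x hx)) hint.integrableOn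
  have h_off : ∫ x in sᶜ, exp (f x) ∂μ ≤ μ.real sᶜ * exp b := by
    rw [← smul_eq_mul, ← setIntegral_const]
    exact setIntegral_mono_on hint.integrableOn (integrableOn_const (measure_ne_top μ _))
      hs.compl (fun x hx => exp_le_exp.mpr (hfsc x hx))
  rw [tilted_apply_eq_ofReal_setIntegral_div hint hs]
  exact ENNReal.ofReal_le_ofReal <| div_add_le_div_add_of_le_of_le (by positivity)
    (by positivity) h_on (setIntegral_nonneg hs.compl fun x _ => (exp_pos _).le) h_off

end MeasureTheory

theorem tilted_measure_mass_lower_bound_general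
    {X : Type*} [MeasurableSpace X] (μ : Measure X) [IsProbabilityMeasure μ]
    (f : X → ℝ)
    (hint : Integrable (fun x => Real.exp (f x)) μ)
    (B : Set X) (hB : MeasurableSet B)
    (ε : ℝ) (hε0 : 0 < ε) (hμB : μ B = ENNReal.ofReal ε)
    (a δ : ℝ)
    (hfB : ∀ x ∈ B, a ≤ f x) (hfBc : ∀ x ∉ B, f x ≤ a - δ)
    (Z : ℝ) (hZ : Z = ∫ x, Real.exp (f x) ∂μ)
    (ν : Measure X)
    (hν : ν = μ.withDensity (fun x => ENNReal.ofReal (Real.exp (f x) / Z))) :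
    ENNReal.ofReal (ε / (ε + (1 - ε) * Real.exp (-δ))) ≤ ν B := by
  have hν_tilted : ν = μ.tilted f := by rw [hν, hZ, Measure.tilted]
  have hμB_real : μ.real B = ε := by rw [measureReal_def, hμB, ENNReal.toReal_ofReal hε0.le]
  have h_ratio : ε / (ε + (1 - ε) * exp (-δ)) =
      μ.real B * exp a / (μ.real B * exp a + μ.real Bᶜ * exp (a - δ)) := by
    rw [probReal_compl_eq_one_sub hB, hμB_real, sub_eq_add_neg a, exp_add,
      show ε * exp a + (1 - ε) * (exp a * exp (-δ)) = (ε + (1 - ε) * exp (-δ)) * exp a by ring,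
      mul_div_mul_right _ _ (exp_pos a).ne']
  rw [hν_tilted, h_ratio]
  exact ofReal_div_le_tilted_apply hint hB (hμB_real ▸ hε0) hfB hfBc

/-- **Supporting lemma for Proposition 1.**
If `μ B = ε ∈ (0,1)`, `f ≥ a` on `B`, and `f ≤ a - δ` on `Bᶜ`, then the exponentially
tilted measure `ν` with `dν/dμ = exp(f)/Z` satisfies
`ν(B) ≥ ε / (ε + (1 - ε) e^{-δ})`. -/
theorem tilted_measure_mass_lower_bound
    {X : Type*} [MeasurableSpace X] (μ : Measure X) [IsProbabilityMeasure μ]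
    (f : X → ℝ) (hf : Measurable f)
    (hint : Integrable (fun x => Real.exp (f x)) μ)
    (B : Set X) (hB : MeasurableSet B)
    (ε : ℝ) (hε0 : 0 < ε) (hε1 : ε < 1) (hμB : μ B = ENNReal.ofReal ε)
    (a δ : ℝ) (hδ : 0 < δ)
    (hfB : ∀ x ∈ B, a ≤ f x) (hfBc : ∀ x ∉ B, f x ≤ a - δ)
    (Z : ℝ) (hZ : Z = ∫ x, Real.exp (f x) ∂μ)
    (ν : Measure X)
    (hν : ν = μ.withDensity (fun x => ENNReal.ofReal (Real.exp (f x) / Z))) :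
    ENNReal.ofReal (ε / (ε + (1 - ε) * Real.exp (-δ))) ≤ ν B :=
  tilted_measure_mass_lower_bound_general μ f hint B hB ε hε0 hμB a δ hfB hfBc Z hZ ν hν
end

section
/- Let (X, 𝒜, μ) be a probability space, f : X → ℝ measurable with exp∘f integrable with respect to μ, and B ∈ 𝒜 with μ(B) = ε ∈ (0, 1). Suppose there exist a ∈ ℝ and δ > 0 such that f ≥ a on B, f ≤ a − δ on Bᶜ, and δ ≥ log(1/ε) + C for some C > 0. Let π be the probability measure with dπ/dμ = exp(f)/Z, Z = ∫ exp(f) dμ. Then π(B) ≥ 1 / (1 + e^{−C}); in particular π(B) > 1/2. -/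
/-!
On `B` the density `exp f` is at least `exp a`, so `∫_B exp f ≥ ε exp a`; off `B` it is at most
`exp (a - δ) ≤ ε exp (-C) exp a`. Hence `∫_{Bᶜ} exp f ≤ exp (-C) ∫_B exp f`, and the tilted mass
`π(B) = ∫_B exp f / (∫_B exp f + ∫_{Bᶜ} exp f)` is at least `1 / (1 + exp (-C))`.
-/

open MeasureTheory Real

lemma one_div_one_add_le_div_add {p q r : ℝ} (hp : 0 < p) (hq : 0 ≤ q) (h : q ≤ r * p) :
    1 / (1 + r) ≤ p / (p + q) := by
  have hr : 0 ≤ r := nonneg_of_mul_nonneg_left (hq.trans h) hp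
  rw [div_le_div_iff₀ (by positivity) (by positivity)]
  linarith

section

variable {X : Type*} [MeasurableSpace X] {μ : Measure X} {f : X → ℝ} {B : Set X}

lemma setIntegral_exp_pos (hint : Integrable (fun x => exp (f x)) μ) (hμB : μ B ≠ 0) :
    0 < ∫ x in B, exp (f x) ∂μ :=
  haveI : NeZero (μ.restrict B) := ⟨by rwa [Ne, Measure.restrict_eq_zero]⟩
  integral_exp_pos hint.restrict

lemma setIntegral_exp_compl_le_of_gap [IsProbabilityMeasure μ] {a δ C : ℝ}
    (hint : Integrable (fun x => exp (f x)) μ) (hB : MeasurableSet B) (hμB : 0 < μ.real B)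
    (hfB : ∀ x ∈ B, a ≤ f x) (hfBc : ∀ x ∉ B, f x ≤ a - δ)
    (hδC : log (1 / μ.real B) + C ≤ δ) :
    ∫ x in Bᶜ, exp (f x) ∂μ ≤ exp (-C) * ∫ x in B, exp (f x) ∂μ := by
  have hlower : exp a * μ.real B ≤ ∫ x in B, exp (f x) ∂μ :=
    setIntegral_ge_of_const_le_real hB (measure_ne_top _ _)
      (fun x hx => exp_le_exp.2 (hfB x hx)) hint.integrableOn
  have hupper : ∫ x in Bᶜ, exp (f x) ∂μ ≤ exp (a - δ) * μ.real Bᶜ := by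
    calc ∫ x in Bᶜ, exp (f x) ∂μ ≤ ∫ _ in Bᶜ, exp (a - δ) ∂μ :=
          setIntegral_mono_on hint.integrableOn (integrableOn_const (measure_ne_top _ _))
            hB.compl fun x hx => exp_le_exp.2 (hfBc x hx)
      _ = exp (a - δ) * μ.real Bᶜ := by rw [setIntegral_const, smul_eq_mul, mul_comm]
  have hgap : exp (a - δ) ≤ exp (-C) * (exp a * μ.real B) := by
    rw [one_div, log_inv] at hδC
    calc exp (a - δ) ≤ exp (a + log (μ.real B) - C) := exp_le_exp.2 (by linarith)
      _ = exp (-C) * (exp a * μ.real B) := by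
          rw [exp_sub, exp_add, exp_log hμB, exp_neg]; ring
  calc ∫ x in Bᶜ, exp (f x) ∂μ ≤ exp (a - δ) * μ.real Bᶜ := hupper
    _ ≤ exp (a - δ) := mul_le_of_le_one_right (exp_pos _).le measureReal_le_one
    _ ≤ exp (-C) * (exp a * μ.real B) := hgap
    _ ≤ exp (-C) * ∫ x in B, exp (f x) ∂μ := by gcongr

lemma ofReal_one_div_one_add_le_tilted_apply [SFinite μ] {r : ℝ}
    (hint : Integrable (fun x => exp (f x)) μ) (hB : MeasurableSet B)
    (hpos : 0 < ∫ x in B, exp (f x) ∂μ)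
    (h : ∫ x in Bᶜ, exp (f x) ∂μ ≤ r * ∫ x in B, exp (f x) ∂μ) :
    ENNReal.ofReal (1 / (1 + r)) ≤ μ.tilted f B := by
  rw [tilted_apply_eq_ofReal_integral, integral_div, ← integral_add_compl hB hint]
  exact ENNReal.ofReal_le_ofReal <| one_div_one_add_le_div_add hpos
    (setIntegral_nonneg hB.compl fun _ _ => (exp_pos _).le) h

end

theorem tilted_measure_concentration_general
    {X : Type*} [MeasurableSpace X] (μ : Measure X) [IsProbabilityMeasure μ]
    (f : X → ℝ)
    (hint : Integrable (fun x => Real.exp (f x)) μ)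
    (B : Set X) (hB : MeasurableSet B)
    (ε : ℝ) (hε0 : 0 < ε) (hμB : μ B = ENNReal.ofReal ε)
    (a δ : ℝ)
    (hfB : ∀ x ∈ B, a ≤ f x) (hfBc : ∀ x ∉ B, f x ≤ a - δ)
    (C : ℝ) (hC : 0 < C) (hδC : Real.log (1 / ε) + C ≤ δ)
    (Z : ℝ) (hZ : Z = ∫ x, Real.exp (f x) ∂μ)
    (ν : Measure X)
    (hν : ν = μ.withDensity (fun x => ENNReal.ofReal (Real.exp (f x) / Z))) :
    ENNReal.ofReal (1 / (1 + Real.exp (-C))) ≤ ν B ∧ ENNReal.ofReal (1 / 2) < ν B := by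
  subst hZ hν
  change _ ≤ μ.tilted f B ∧ _ < μ.tilted f B
  have hμB' : μ.real B = ε := by rw [measureReal_def, hμB, ENNReal.toReal_ofReal hε0.le]
  have hpos := setIntegral_exp_pos hint (by simpa [hμB] using hε0 : μ B ≠ 0)
  have hconc := ofReal_one_div_one_add_le_tilted_apply hint hB hpos <|
    setIntegral_exp_compl_le_of_gap hint hB (hμB' ▸ hε0) hfB hfBc (hμB' ▸ hδC)
  refine ⟨hconc, lt_of_lt_of_le ?_ hconc⟩
  have hexp : exp (-C) < 1 := exp_lt_one_iff.2 (neg_lt_zero.2 hC)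
  exact (ENNReal.ofReal_lt_ofReal_iff (by positivity)).2 <|
    one_div_lt_one_div_of_lt (by positivity) (by linarith)

/-- **Supporting lemma for Proposition 1.**
Under the complex-reward gap condition `δ ≥ log(1/ε) + C` with `C > 0`, the exponentially
tilted measure `ν` with `dν/dμ = exp(f)/Z` concentrates mass on the rare set `B`:
`ν(B) ≥ 1/(1 + e^{-C})`, and in particular `ν(B) > 1/2`. -/
theorem tilted_measure_concentration
    {X : Type*} [MeasurableSpace X] (μ : Measure X) [IsProbabilityMeasure μ]
    (f : X → ℝ) (hf : Measurable f)
    (hint : Integrable (fun x => Real.exp (f x)) μ)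
    (B : Set X) (hB : MeasurableSet B)
    (ε : ℝ) (hε0 : 0 < ε) (hε1 : ε < 1) (hμB : μ B = ENNReal.ofReal ε)
    (a δ : ℝ) (hδ : 0 < δ)
    (hfB : ∀ x ∈ B, a ≤ f x) (hfBc : ∀ x ∉ B, f x ≤ a - δ)
    (C : ℝ) (hC : 0 < C) (hδC : Real.log (1 / ε) + C ≤ δ)
    (Z : ℝ) (hZ : Z = ∫ x, Real.exp (f x) ∂μ)
    (ν : Measure X)
    (hν : ν = μ.withDensity (fun x => ENNReal.ofReal (Real.exp (f x) / Z))) :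
    ENNReal.ofReal (1 / (1 + Real.exp (-C))) ≤ ν B ∧ ENNReal.ofReal (1 / 2) < ν B :=
  tilted_measure_concentration_general μ f hint B hB ε hε0 hμB a δ hfB hfBc C hC hδC Z hZ ν hν
end
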